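/- Let p be a prime, δ = p^{−1/(p−1)}, and let F be a field of characteristic zero equipped with a multiplicative nonarchimedean absolute value ‖·‖ (satisfying ‖x+y‖ ≤ max(‖x‖,‖y‖)) whose restriction to ℚ is the p-adic absolute value, so ‖(p:F)‖ = p^{−1}. Let α₁, …, α_s ∈ F be distinct, let n = (n₁, …, n_s) ∈ ℕ^s with N = n₁+⋯+n_s ≥ 1, and let i ∈ {1, …, s}. Then: (a) ‖P_n(α_i)‖ ≤ p²·N·∏_{k=1}^s max(‖α_i − α_k‖, δ)^{n_k}; (b) if moreover ‖α_i − α_k‖ ≤ 1 for all k = 1, …, s, then ‖P_n(α_i)‖ ≤ ‖(n_i! : F)‖. -/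

import Mathlib

open Polynomial

/-- `f_m(z) = ∏ₖ (z − αₖ)^{mₖ}`. -/
noncomputable def fpoly {F : Type*} [Field F] {s : ℕ} (α : Fin s → F) (m : Fin s → ℕ) :
    F[X] := ∏ k, (X - C (α k)) ^ m k

/-- `P_m(z) = Σ_{j=0}^{M} f_m^{(j)}(z)`, the sum of `f_m` and all its derivatives. -/
noncomputable def Ppoly {F : Type*} [Field F] {s : ℕ} (α : Fin s → F) (m : Fin s → ℕ) :
    F[X] := ∑ j ∈ Finset.range (∑ k, m k + 1), derivative^[j] (fpoly α m)

/-!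
Taylor expansion at `αᵢ` gives `P_n(αᵢ) = ∑ⱼ j! cⱼ`, where `cⱼ` are the coefficients of
`T = ∏ₖ (X - (αₖ - αᵢ))^{nₖ}`. For a nonarchimedean absolute value the Gauss norm of radius `c`
is multiplicative, so `‖cⱼ‖ cʲ ≤ ∏ₖ max(‖αᵢ - αₖ‖, c)^{nₖ}`, and by the ultrametric inequality
it suffices to bound each term `j! cⱼ`.
For (a) take `c = δ`: Legendre's formula `(p - 1) v_p(j!) = j - s_p(j)` with the digit-wise
bound `s_p(j) ≤ (p - 1)(log_p j + 1)` gives `‖j!‖ ≤ δʲ p j`. For (b) take `c = 1`: then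
`‖cⱼ‖ ≤ 1`, `cⱼ = 0` for `j < nᵢ` since `X^{nᵢ} ∣ T`, and `nᵢ! ∣ j!` for `j ≥ nᵢ`.
-/

open Nat

lemma digits_sum_le_sub_one_mul_log_add_one {b : ℕ} (hb : 1 < b) (j : ℕ) :
    (b.digits j).sum ≤ (b - 1) * (log b j + 1) := by
  have hlen : (b.digits j).length ≤ log b j + 1 := by
    rcases eq_or_ne j 0 with rfl | hj
    · simp
    · exact (length_digits b j hb hj).le
  calc (b.digits j).sum ≤ (b.digits j).length * (b - 1) := by
        simpa using List.sum_le_card_nsmul _ _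
          fun d hd => Nat.le_sub_one_of_lt (digits_lt_base hb hd)
    _ ≤ (b - 1) * (log b j + 1) := by rw [mul_comm]; gcongr

lemma le_sub_one_mul_padicValNat_factorial_add_log {p : ℕ} [hp : Fact p.Prime] (j : ℕ) :
    j ≤ (p - 1) * (padicValNat p j ! + (log p j + 1)) := by
  have hlegendre := sub_one_mul_padicValNat_factorial (p := p) j
  have hdigits := digits_sum_le_sub_one_mul_log_add_one hp.out.one_lt j
  have hdigits_le := digit_sum_le p j
  rw [Nat.mul_add]
  omega

lemma padicNorm_factorial_le {p : ℕ} [hp : Fact p.Prime] {j : ℕ} (hj : j ≠ 0) :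
    (padicNorm p (j ! : ℚ) : ℝ) ≤ ((p : ℝ) ^ (-(1 : ℝ) / ((p : ℝ) - 1))) ^ j * (p * j) := by
  set v := padicValNat p j !
  set L := log p j
  have hp1 : (1 : ℝ) < p := by exact_mod_cast hp.out.one_lt
  have hp0 : (0 : ℝ) < p := by linarith
  have hnorm : (padicNorm p (j ! : ℚ) : ℝ) = (p : ℝ) ^ (-(v : ℝ)) := by
    rw [padicNorm.eq_zpow_of_nonzero (by positivity), padicValRat.of_nat, Real.rpow_neg hp0.le,
      Real.rpow_natCast, Rat.cast_zpow, Rat.cast_natCast, zpow_neg, zpow_natCast]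
  have hexp : -(v : ℝ) ≤ -(1 : ℝ) / ((p : ℝ) - 1) * j + (L + 1) := by
    have hj_le := Nat.cast_le (α := ℝ) |>.mpr
      (le_sub_one_mul_padicValNat_factorial_add_log (p := p) j)
    push_cast [Nat.cast_sub hp.out.one_lt.le] at hj_le
    have hdiv : (j : ℝ) / ((p : ℝ) - 1) ≤ v + (L + 1) := by
      rw [div_le_iff₀ (by linarith)]
      linarith
    have hrw : -(1 : ℝ) / ((p : ℝ) - 1) * j = -((j : ℝ) / ((p : ℝ) - 1)) := by ring
    linarith
  rw [hnorm]
  calc (p : ℝ) ^ (-(v : ℝ)) ≤ (p : ℝ) ^ (-(1 : ℝ) / ((p : ℝ) - 1) * j + (L + 1)) :=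
        Real.rpow_le_rpow_of_exponent_le hp1.le hexp
    _ = ((p : ℝ) ^ (-(1 : ℝ) / ((p : ℝ) - 1))) ^ j * (p * p ^ L) := by
        rw [Real.rpow_add hp0, Real.rpow_mul hp0.le, Real.rpow_natCast, ← Nat.cast_add_one,
          Real.rpow_natCast, _root_.pow_succ']
    _ ≤ ((p : ℝ) ^ (-(1 : ℝ) / ((p : ℝ) - 1))) ^ j * (p * j) := by
        gcongr
        exact_mod_cast pow_log_le_self p hj

section GaussNorm

variable {K : Type*} [NormedField K] [IsUltrametricDist K] {c : ℝ}

lemma gaussNorm_X_sub_C_le (hc : 0 ≤ c) (b : K) :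
    (X - C b).gaussNorm (NormedField.toAbsoluteValue K) c ≤ max ‖b‖ c := by
  have hna := isNonarchimedean_gaussNorm (NormedField.toAbsoluteValue K)
    IsUltrametricDist.isNonarchimedean_norm hc
  calc (X - C b).gaussNorm (NormedField.toAbsoluteValue K) c
      = (X + C (-b)).gaussNorm (NormedField.toAbsoluteValue K) c := by
        rw [map_neg, sub_eq_add_neg]
    _ ≤ max ‖b‖ c := by
        refine (hna _ _).trans_eq ?_
        rw [← monomial_one_one_eq_X, gaussNorm_monomial, gaussNorm_C, max_comm]
        simp [NormedField.toAbsoluteValue]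

lemma gaussNorm_prod_X_sub_C_pow_le {ι : Type*} (hc : 0 < c) (s : Finset ι) (b : ι → K)
    (m : ι → ℕ) :
    (∏ k ∈ s, (X - C (b k)) ^ m k).gaussNorm (NormedField.toAbsoluteValue K) c ≤
      ∏ k ∈ s, max ‖b k‖ c ^ m k := by
  have := gaussNorm_isAbsoluteValue (v := NormedField.toAbsoluteValue K)
    IsUltrametricDist.isNonarchimedean_norm hc
  let g := IsAbsoluteValue.toAbsoluteValue (gaussNorm (NormedField.toAbsoluteValue K) c)
  change g _ ≤ _
  rw [map_prod]
  gcongr with k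
  rw [map_pow]
  gcongr
  exact gaussNorm_X_sub_C_le hc.le _

lemma norm_coeff_prod_X_sub_C_pow_mul_pow_le {ι : Type*} (hc : 0 < c) (s : Finset ι)
    (b : ι → K) (m : ι → ℕ) (j : ℕ) :
    ‖(∏ k ∈ s, (X - C (b k)) ^ m k).coeff j‖ * c ^ j ≤ ∏ k ∈ s, max ‖b k‖ c ^ m k :=
  (le_gaussNorm _ _ hc.le j).trans (gaussNorm_prod_X_sub_C_pow_le hc s b m)

end GaussNorm

lemma norm_factorial_le_of_le {R : Type*} [SeminormedRing R] [NormOneClass R]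
    [IsUltrametricDist R] {m j : ℕ} (h : m ≤ j) : ‖(j ! : R)‖ ≤ ‖(m ! : R)‖ := by
  obtain ⟨d, hd⟩ := factorial_dvd_factorial h
  rw [hd, Nat.cast_mul]
  exact (norm_mul_le _ _).trans
    (mul_le_of_le_one_right (norm_nonneg _) (IsUltrametricDist.norm_natCast_le_one R d))

section Taylor

variable {F : Type*} [Field F]

lemma taylor_fpoly {s : ℕ} (α : Fin s → F) (m : Fin s → ℕ) (r : F) :
    taylor r (fpoly α m) = ∏ k, (X - C (α k - r)) ^ m k := by
  simp only [fpoly, taylor_apply, prod_comp, pow_comp, sub_comp, X_comp, C_comp, map_sub]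
  exact Finset.prod_congr rfl fun k _ => by ring

lemma eval_iterate_derivative_eq_factorial_mul_coeff_taylor (f : F[X]) (r : F) (j : ℕ) :
    (derivative^[j] f).eval r = j ! * (taylor r f).coeff j := by
  rw [taylor_coeff, ← factorial_smul_hasseDeriv]
  simp [nsmul_eq_mul]

lemma eval_Ppoly {s : ℕ} (α : Fin s → F) (m : Fin s → ℕ) (r : F) :
    (Ppoly α m).eval r =
      ∑ j ∈ Finset.range (∑ k, m k + 1), (j ! : F) * (∏ k, (X - C (α k - r)) ^ m k).coeff j := by
  simp only [Ppoly, eval_finsetSum, eval_iterate_derivative_eq_factorial_mul_coeff_taylor,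
    taylor_fpoly]

end Taylor

section Estimates

variable {F : Type*} [NormedField F] [IsUltrametricDist F] {s : ℕ} (α : Fin s → F)
  (n : Fin s → ℕ) (i : Fin s)

lemma norm_coeff_taylor_fpoly_mul_pow_le {c : ℝ} (hc : 0 < c) (j : ℕ) :
    ‖(∏ k, (X - C (α k - α i)) ^ n k).coeff j‖ * c ^ j ≤ ∏ k, max ‖α i - α k‖ c ^ n k := by
  simpa only [norm_sub_rev (α _) (α i)] using
    norm_coeff_prod_X_sub_C_pow_mul_pow_le hc Finset.univ (fun k => α k - α i) n j

lemma norm_eval_Ppoly_le {p : ℕ} [hp : Fact p.Prime]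
    (hnorm : ∀ m : ℕ, ‖(m : F)‖ = padicNorm p m) (hn : 1 ≤ ∑ k, n k) :
    ‖(Ppoly α n).eval (α i)‖ ≤
      p * (∑ k, n k) * ∏ k, max ‖α i - α k‖ ((p : ℝ) ^ (-(1 : ℝ) / ((p : ℝ) - 1))) ^ n k := by
  set δ := (p : ℝ) ^ (-(1 : ℝ) / ((p : ℝ) - 1))
  set N := ∑ k, n k
  have hδ0 : 0 < δ := Real.rpow_pos_of_pos (by exact_mod_cast hp.out.pos) _
  rw [eval_Ppoly]
  refine IsUltrametricDist.norm_sum_le_of_forall_le_of_nonneg (by positivity) fun j hj => ?_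
  have hfact : ‖(j ! : F)‖ ≤ δ ^ j * (p * N) := by
    rcases eq_or_ne j 0 with rfl | hj0
    · simpa using one_le_mul_of_one_le_of_one_le (by exact_mod_cast hp.out.one_lt.le)
        (by exact_mod_cast hn : (1 : ℝ) ≤ N)
    · rw [hnorm]
      refine (padicNorm_factorial_le hj0).trans ?_
      gcongr
      exact Finset.mem_range_succ_iff.mp hj
  calc ‖(j ! : F) * (∏ k, (X - C (α k - α i)) ^ n k).coeff j‖
      ≤ δ ^ j * (p * N) * ‖(∏ k, (X - C (α k - α i)) ^ n k).coeff j‖ := by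
        rw [norm_mul]; gcongr
    _ = p * N * (‖(∏ k, (X - C (α k - α i)) ^ n k).coeff j‖ * δ ^ j) := by ring
    _ ≤ p * N * ∏ k, max ‖α i - α k‖ δ ^ n k := by
        gcongr; exact norm_coeff_taylor_fpoly_mul_pow_le α n i hδ0 j

lemma norm_eval_Ppoly_le_norm_factorial (hclose : ∀ k, ‖α i - α k‖ ≤ 1) :
    ‖(Ppoly α n).eval (α i)‖ ≤ ‖((n i)! : F)‖ := by
  rw [eval_Ppoly]
  refine IsUltrametricDist.norm_sum_le_of_forall_le_of_nonneg (norm_nonneg _) fun j _ => ?_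
  rcases le_or_gt (n i) j with hij | hji
  · have hcoeff : ‖(∏ k, (X - C (α k - α i)) ^ n k).coeff j‖ ≤ 1 := by
      simpa [max_eq_right (hclose _)] using norm_coeff_taylor_fpoly_mul_pow_le α n i one_pos j
    rw [norm_mul]
    exact (mul_le_of_le_one_right (norm_nonneg _) hcoeff).trans (norm_factorial_le_of_le hij)
  · have hdvd : X ^ n i ∣ ∏ k, (X - C (α k - α i)) ^ n k := by
      have h := Finset.dvd_prod_of_mem (fun k => (X - C (α k - α i)) ^ n k) (Finset.mem_univ i)
      rwa [sub_self, map_zero, sub_zero] at h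
    rw [X_pow_dvd_iff.mp hdvd j hji, mul_zero, norm_zero]
    exact norm_nonneg _

end Estimates

theorem stmt10_general {F : Type*} [NormedField F]
    (p : ℕ) (hp : p.Prime)
    (hna : ∀ x y : F, ‖x + y‖ ≤ max ‖x‖ ‖y‖)
    (hQ : ∀ q : ℚ, ‖(q : F)‖ = (padicNorm p q : ℝ))
    (δ : ℝ) (hδ : δ = (p : ℝ) ^ (-(1 : ℝ) / ((p : ℝ) - 1)))
    {s : ℕ} (α : Fin s → F)
    (n : Fin s → ℕ) (N : ℕ) (hN : N = ∑ k, n k) (hN1 : 1 ≤ N)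
    (i : Fin s) :
    ‖(Ppoly α n).eval (α i)‖ ≤
        (p : ℝ) ^ 2 * N * ∏ k, max ‖α i - α k‖ δ ^ n k ∧
      ((∀ k, ‖α i - α k‖ ≤ 1) →
        ‖(Ppoly α n).eval (α i)‖ ≤ ‖((n i).factorial : F)‖) := by
  have := IsUltrametricDist.isUltrametricDist_of_forall_norm_add_le_max_norm hna
  have : Fact p.Prime := ⟨hp⟩
  refine ⟨?_, norm_eval_Ppoly_le_norm_factorial α n i⟩
  subst hN hδ
  refine (norm_eval_Ppoly_le α n i (fun m => by exact_mod_cast hQ m) hN1).trans ?_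
  gcongr
  exact le_self_pow₀ (by exact_mod_cast hp.one_lt.le) two_ne_zero

/-- Over a characteristic-zero field with a multiplicative
nonarchimedean absolute value restricting to the `p`-adic absolute value on `ℚ`,
with `δ = p^{−1/(p−1)}`:
(a) `‖P_n(αᵢ)‖ ≤ p² N ∏ₖ max(‖αᵢ−αₖ‖, δ)^{nₖ}`;
(b) if `‖αᵢ−αₖ‖ ≤ 1` for all `k`, then `‖P_n(αᵢ)‖ ≤ ‖nᵢ!‖`. -/
theorem stmt10 {F : Type*} [NormedField F] [CharZero F]
    (p : ℕ) (hp : p.Prime)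
    (hna : ∀ x y : F, ‖x + y‖ ≤ max ‖x‖ ‖y‖)
    (hQ : ∀ q : ℚ, ‖(q : F)‖ = (padicNorm p q : ℝ))
    (δ : ℝ) (hδ : δ = (p : ℝ) ^ (-(1 : ℝ) / ((p : ℝ) - 1)))
    {s : ℕ} (α : Fin s → F) (hα : Function.Injective α)
    (n : Fin s → ℕ) (N : ℕ) (hN : N = ∑ k, n k) (hN1 : 1 ≤ N)
    (i : Fin s) :
    ‖(Ppoly α n).eval (α i)‖ ≤
        (p : ℝ) ^ 2 * N * ∏ k, max ‖α i - α k‖ δ ^ n k ∧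
      ((∀ k, ‖α i - α k‖ ≤ 1) →
        ‖(Ppoly α n).eval (α i)‖ ≤ ‖((n i).factorial : F)‖) :=
  stmt10_general p hp hna hQ δ hδ α n N hN hN1 i
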